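/- The function h(τ) = δ - 1/2 + ∫_{2/τ}^∞ (x² - 4/τ²) φ(x) dx - t/τ² is strictly increasing on (0, ∞), tends to -∞ as τ → 0⁺, and tends to δ > 0 as τ → ∞; consequently h has a unique zero on (0,∞). -/

import Mathlib

/-!
With `sqExcess a = ∫_a^∞ (x² - a²) φ(x) dx` we have `h τ = δ - 1/2 + sqExcess (2/τ) - t/τ²`.
`sqExcess` is continuous, antitone on `a ≥ 0` (there the integrand is nonnegative and decreasing in
`a`), and `sqExcess 0 = ∫_0^∞ x² φ = 1/2` by integrating `(x² - 1) φ = (-x φ)'`. Hence `h` is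
strictly increasing, `h τ ≤ δ - t/τ² → -∞` as `τ → 0⁺`, and `h τ → δ - 1/2 + 1/2 = δ` as `τ → ∞`;
the intermediate value theorem gives a zero, unique by monotonicity.
-/

open Real Set MeasureTheory Filter

/-- standard normal density -/
noncomputable def stdPDF (x : ℝ) : ℝ := Real.exp (-x ^ 2 / 2) / Real.sqrt (2 * Real.pi)

open Topology

theorem MeasureTheory.Integrable.continuous_setIntegral_Ioi {E : Type*} [NormedAddCommGroup E]
    [NormedSpace ℝ E] {f : ℝ → E} (hf : Integrable f) :
    Continuous fun a => ∫ x in Ioi a, f x :=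
  continuous_iff_continuousAt.2 fun a =>
    (hf.integrableOn.continuousOn_Ici_primitive_Ioi (a₀ := a - 1)).continuousAt
      (Ici_mem_nhds (by linarith))

lemma stdPDF_nonneg (x : ℝ) : 0 ≤ stdPDF x := by
  unfold stdPDF
  positivity

lemma stdPDF_eq_mul_exp (x : ℝ) : stdPDF x = (√(2 * π))⁻¹ * exp (-(1 / 2) * x ^ 2) := by
  rw [stdPDF, div_eq_inv_mul]
  ring_nf

lemma integrable_stdPDF : Integrable stdPDF := by
  simpa only [← stdPDF_eq_mul_exp] using
    (integrable_exp_neg_mul_sq (by norm_num : (0 : ℝ) < 1 / 2)).const_mul (√(2 * π))⁻¹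

lemma integrable_sq_mul_stdPDF : Integrable fun x : ℝ => x ^ 2 * stdPDF x := by
  have h := (integrable_rpow_mul_exp_neg_mul_sq (b := 1 / 2) (by norm_num)
    (s := 2) (by norm_num)).const_mul (√(2 * π))⁻¹
  refine h.congr (ae_of_all _ fun x => ?_)
  simp only [stdPDF_eq_mul_exp, rpow_two]
  ring

lemma hasDerivAt_stdPDF (x : ℝ) : HasDerivAt stdPDF (-x * stdPDF x) x := by
  have h := ((hasDerivAt_pow 2 x).const_mul (-(1 / 2) : ℝ)).exp.const_mul (√(2 * π))⁻¹
  rw [show (fun y => (√(2 * π))⁻¹ * exp (-(1 / 2) * y ^ 2)) = stdPDF from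
    funext fun y => (stdPDF_eq_mul_exp y).symm] at h
  refine h.congr_deriv ?_
  rw [stdPDF_eq_mul_exp]
  push_cast
  ring

lemma tendsto_mul_stdPDF_atTop : Tendsto (fun x : ℝ => x * stdPDF x) atTop (𝓝 0) := by
  have h : (fun x : ℝ => x * exp (-(1 / 2) * x ^ 2)) =o[atTop] fun x => exp (-(1 / 2) * x) :=
    (rpow_mul_exp_neg_mul_sq_isLittleO_exp_neg (by norm_num : (0 : ℝ) < 1 / 2) 1).congr_left
      fun x => by rw [rpow_one]
  have hexp : Tendsto (fun x : ℝ => exp (-(1 / 2) * x)) atTop (𝓝 0) :=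
    tendsto_exp_atBot.comp ((tendsto_const_mul_atBot_of_neg (by norm_num)).2 tendsto_id)
  have h0 := (h.trans_tendsto hexp).const_mul (√(2 * π))⁻¹
  rw [mul_zero] at h0
  refine h0.congr fun x => ?_
  rw [stdPDF_eq_mul_exp]
  ring

lemma integral_stdPDF_Ioi_zero : ∫ x in Ioi (0 : ℝ), stdPDF x = 1 / 2 := by
  simp only [stdPDF_eq_mul_exp, integral_const_mul]
  rw [integral_gaussian_Ioi, show π / (1 / 2) = 2 * π by ring]
  have : 0 < √(2 * π) := by positivity
  field_simp

lemma integral_sq_mul_stdPDF_Ioi_zero : ∫ x in Ioi (0 : ℝ), x ^ 2 * stdPDF x = 1 / 2 := by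
  have hderiv (x : ℝ) : HasDerivAt (fun x => -x * stdPDF x) ((x ^ 2 - 1) * stdPDF x) x := by
    refine ((hasDerivAt_neg x).fun_mul (hasDerivAt_stdPDF x)).congr_deriv ?_
    ring
  have hint : Integrable fun x : ℝ => (x ^ 2 - 1) * stdPDF x := by
    refine (integrable_sq_mul_stdPDF.sub integrable_stdPDF).congr (ae_of_all _ fun x => ?_)
    simp only [Pi.sub_apply]
    ring
  have hlim : Tendsto (fun x : ℝ => -x * stdPDF x) atTop (𝓝 0) := by
    simpa only [neg_mul, neg_zero] using tendsto_mul_stdPDF_atTop.neg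
  have hzero :=
    integral_Ioi_of_hasDerivAt_of_tendsto' (a := 0) (fun x _ => hderiv x) hint.integrableOn hlim
  rw [integral_congr_ae (ae_of_all _ fun x => sub_one_mul (x ^ 2) (stdPDF x)),
    integral_sub integrable_sq_mul_stdPDF.integrableOn integrable_stdPDF.integrableOn,
    integral_stdPDF_Ioi_zero] at hzero
  linarith

noncomputable def sqExcess (a : ℝ) : ℝ := ∫ x in Ioi a, (x ^ 2 - a ^ 2) * stdPDF x

lemma sqExcess_eq (a : ℝ) :
    sqExcess a = (∫ x in Ioi a, x ^ 2 * stdPDF x) - a ^ 2 * ∫ x in Ioi a, stdPDF x := by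
  rw [sqExcess, ← integral_const_mul, ← integral_sub integrable_sq_mul_stdPDF.integrableOn
    (integrable_stdPDF.const_mul _).integrableOn]
  simp only [sub_mul]

lemma continuous_sqExcess : Continuous sqExcess := by
  simp only [funext sqExcess_eq]
  exact integrable_sq_mul_stdPDF.continuous_setIntegral_Ioi.sub
    ((continuous_pow 2).mul integrable_stdPDF.continuous_setIntegral_Ioi)

lemma sqExcess_zero : sqExcess 0 = 1 / 2 := by
  simp [sqExcess_eq, integral_sq_mul_stdPDF_Ioi_zero]

lemma integrableOn_sqExcess_integrand (a : ℝ) (s : Set ℝ) :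
    IntegrableOn (fun x => (x ^ 2 - a ^ 2) * stdPDF x) s := by
  refine ((integrable_sq_mul_stdPDF.sub (integrable_stdPDF.const_mul (a ^ 2))).congr
    (ae_of_all _ fun x => ?_)).integrableOn
  simp only [Pi.sub_apply]
  ring

lemma sqExcess_antitoneOn : AntitoneOn sqExcess (Ici 0) := by
  intro a (ha : 0 ≤ a) b _ hab
  calc sqExcess b ≤ ∫ x in Ioi b, (x ^ 2 - a ^ 2) * stdPDF x := by
        refine setIntegral_mono (integrableOn_sqExcess_integrand b _)
          (integrableOn_sqExcess_integrand a _) fun x => ?_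
        have : a ^ 2 ≤ b ^ 2 := pow_le_pow_left₀ ha hab 2
        nlinarith [stdPDF_nonneg x]
    _ ≤ sqExcess a := by
        refine setIntegral_mono_set (integrableOn_sqExcess_integrand a _) ?_
          (Ioi_subset_Ioi hab).eventuallyLE
        refine (ae_restrict_iff' measurableSet_Ioi).2 (ae_of_all _ fun x (hx : a < x) => ?_)
        have : a ^ 2 ≤ x ^ 2 := pow_le_pow_left₀ ha hx.le 2
        exact mul_nonneg (by linarith) (stdPDF_nonneg x)

lemma sqExcess_le_half {a : ℝ} (ha : 0 ≤ a) : sqExcess a ≤ 1 / 2 :=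
  sqExcess_zero ▸ sqExcess_antitoneOn self_mem_Ici ha ha

section

variable (c : ℝ) {t : ℝ}

lemma strictMonoOn_sqExcess_sub (ht : 0 < t) :
    StrictMonoOn (fun τ => c + sqExcess (2 / τ) - t / τ ^ 2) (Ioi 0) := by
  intro τ₁ (h₁ : 0 < τ₁) τ₂ (h₂ : 0 < τ₂) hlt
  have hF : sqExcess (2 / τ₁) ≤ sqExcess (2 / τ₂) :=
    sqExcess_antitoneOn (mem_Ici.2 (by positivity)) (mem_Ici.2 (by positivity))
      (div_le_div_of_nonneg_left zero_le_two h₁ hlt.le)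
  have ht' : t / τ₂ ^ 2 < t / τ₁ ^ 2 :=
    div_lt_div_of_pos_left ht (by positivity) (pow_lt_pow_left₀ hlt h₁.le two_ne_zero)
  simp only
  linarith

lemma tendsto_sqExcess_sub_nhdsGT_zero (ht : 0 < t) :
    Tendsto (fun τ => c + sqExcess (2 / τ) - t / τ ^ 2) (𝓝[>] 0) atBot := by
  have hblow : Tendsto (fun τ : ℝ => t / τ ^ 2) (𝓝[>] 0) atTop := by
    simp only [div_eq_mul_inv, ← inv_pow]
    exact ((tendsto_pow_atTop two_ne_zero).comp tendsto_inv_nhdsGT_zero).const_mul_atTop ht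
  refine tendsto_atBot_mono' _ ?_
    (tendsto_atBot_add_const_left _ (c + 1 / 2) (tendsto_neg_atTop_atBot.comp hblow))
  filter_upwards [self_mem_nhdsWithin] with τ (hτ : 0 < τ)
  have := sqExcess_le_half (a := 2 / τ) (by positivity)
  simp only [Function.comp_apply]
  linarith

lemma tendsto_sqExcess_sub_atTop :
    Tendsto (fun τ => c + sqExcess (2 / τ) - t / τ ^ 2) atTop (𝓝 (c + 1 / 2)) := by
  have hF : Tendsto (fun τ : ℝ => sqExcess (2 / τ)) atTop (𝓝 (1 / 2)) :=
    sqExcess_zero ▸ continuous_sqExcess.continuousAt.tendsto.comp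
      (tendsto_const_nhds.div_atTop tendsto_id)
  have hvanish : Tendsto (fun τ : ℝ => t / τ ^ 2) atTop (𝓝 0) :=
    tendsto_const_nhds.div_atTop (tendsto_pow_atTop two_ne_zero)
  simpa using (tendsto_const_nhds.add hF).sub hvanish

lemma continuousOn_sqExcess_sub :
    ContinuousOn (fun τ => c + sqExcess (2 / τ) - t / τ ^ 2) (Ioi 0) := by
  have hne : ∀ τ ∈ Ioi (0 : ℝ), τ ≠ 0 := fun τ hτ => hτ.ne'
  exact (continuousOn_const.add (continuous_sqExcess.comp_continuousOn
    (continuousOn_const.div continuousOn_id hne))).sub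
    (continuousOn_const.div (continuousOn_pow 2) fun τ hτ => pow_ne_zero 2 (hne τ hτ))

end

theorem h_strictMono_limits_unique_zero (t δ : ℝ) (ht : 0 < t) (hδ : 1 / 2 < δ)
    (h : ℝ → ℝ)
    (hdef : ∀ τ : ℝ, h τ = δ - 1 / 2
      + (∫ x in Set.Ioi (2 / τ), (x ^ 2 - 4 / τ ^ 2) * stdPDF x) - t / τ ^ 2) :
    StrictMonoOn h (Set.Ioi (0 : ℝ)) ∧
    Filter.Tendsto h (nhdsWithin 0 (Set.Ioi 0)) Filter.atBot ∧
    Filter.Tendsto h Filter.atTop (nhds δ) ∧ 0 < δ ∧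
    ∃! τ : ℝ, τ ∈ Set.Ioi (0 : ℝ) ∧ h τ = 0 := by
  obtain rfl : h = fun τ => (δ - 1 / 2) + sqExcess (2 / τ) - t / τ ^ 2 := by
    funext τ
    rw [hdef, sqExcess, div_pow]
    norm_num
  have hmono := strictMonoOn_sqExcess_sub (δ - 1 / 2) ht
  have hbot := tendsto_sqExcess_sub_nhdsGT_zero (δ - 1 / 2) ht
  have htop := sub_add_cancel δ (1 / 2) ▸ tendsto_sqExcess_sub_atTop (δ - 1 / 2) (t := t)
  have hδ0 : 0 < δ := by linarith
  obtain ⟨τ, hτ, hτ0⟩ := isPreconnected_Ioi.intermediate_value_Iio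
    (le_principal_iff.2 self_mem_nhdsWithin) (le_principal_iff.2 (Ioi_mem_atTop 0))
    (continuousOn_sqExcess_sub _) hbot htop hδ0
  exact ⟨hmono, hbot, htop, hδ0, τ, ⟨hτ, hτ0⟩,
    fun σ hσ => hmono.injOn hσ.1 hτ (hσ.2.trans hτ0.symm)⟩
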